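/- On {ρ>0, p>0} with κ = 3, let Z₁ = (2ρ, 6p, 0), Z₂ = (0, 0, 2√3·√(p/ρ)), X₀ = (1,0,0), and define the rescaled vector fields Z̄₁ := Z₁, Z̄₂ := (√(ρ/p))·Z₂ = (0,0,2√3), X̄₀ := ρ·X₀ = (ρ,0,0). Then all pairwise Lie brackets vanish: [X̄₀, Z̄₁] = [X̄₀, Z̄₂] = [Z̄₁, Z̄₂] = 0. -/

import Mathlib

noncomputable section

/-- Lie bracket of vector fields on `ℝ³`: `[X,Y] = (DY)X − (DX)Y`. -/
def bracket (X Y : (Fin 3 → ℝ) → (Fin 3 → ℝ)) : (Fin 3 → ℝ) → (Fin 3 → ℝ) :=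
  fun p => fderiv ℝ Y p (X p) - fderiv ℝ X p (Y p)

/-- `Z₁ = (2ρ, 6p, 0)` (Euler system, κ = 3). -/
def Z1 : (Fin 3 → ℝ) → (Fin 3 → ℝ) := fun v => ![2 * v 0, 6 * v 1, 0]

/-- `Z₂ = (0, 0, 2√3·√(p/ρ))`. -/
def Z2 : (Fin 3 → ℝ) → (Fin 3 → ℝ) :=
  fun v => ![0, 0, 2 * Real.sqrt 3 * Real.sqrt (v 1 / v 0)]

/-- `X₀ = (1,0,0)`. -/
def Xzero : (Fin 3 → ℝ) → (Fin 3 → ℝ) := fun _ => ![1, 0, 0]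

/-- Rescaled `Z̄₁ := Z₁`. -/
def Z1bar : (Fin 3 → ℝ) → (Fin 3 → ℝ) := Z1

/-- Rescaled `Z̄₂ := √(ρ/p)·Z₂`. -/
def Z2bar : (Fin 3 → ℝ) → (Fin 3 → ℝ) := fun v => Real.sqrt (v 0 / v 1) • Z2 v

/-- Rescaled `X̄₀ := ρ·X₀`. -/
def X0bar : (Fin 3 → ℝ) → (Fin 3 → ℝ) := fun v => v 0 • Xzero v

/-- The continuous linear map `v ↦ (v 0, 0, 0)`. -/
def L0 : (Fin 3 → ℝ) →L[ℝ] (Fin 3 → ℝ) :=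
  ContinuousLinearMap.pi ![ContinuousLinearMap.proj 0, 0, 0]

/-- The continuous linear map `v ↦ (2 v 0, 6 v 1, 0)`. -/
def L1 : (Fin 3 → ℝ) →L[ℝ] (Fin 3 → ℝ) :=
  ContinuousLinearMap.pi
    ![(2:ℝ) • ContinuousLinearMap.proj 0, (6:ℝ) • ContinuousLinearMap.proj 1, 0]

lemma X0bar_eq : X0bar = fun v => L0 v := by
  funext v i
  fin_cases i <;>
    simp [X0bar, Xzero, L0, ContinuousLinearMap.pi_apply]

lemma Z1bar_eq : Z1bar = fun v => L1 v := by
  funext v i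
  fin_cases i <;>
    simp [Z1bar, Z1, L1, ContinuousLinearMap.pi_apply]

lemma fderiv_X0bar (v : Fin 3 → ℝ) : fderiv ℝ X0bar v = L0 := by
  rw [X0bar_eq]; exact L0.fderiv

lemma fderiv_Z1bar (v : Fin 3 → ℝ) : fderiv ℝ Z1bar v = L1 := by
  rw [Z1bar_eq]; exact L1.fderiv

lemma Z2bar_eq_const {v : Fin 3 → ℝ} (h0 : 0 < v 0) (h1 : 0 < v 1) :
    Z2bar v = ![0, 0, 2 * Real.sqrt 3] := by
  funext i
  fin_cases i <;> simp [Z2bar, Z2]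
  have : Real.sqrt (v 0 / v 1) * Real.sqrt (v 1 / v 0) = 1 := by
    rw [← Real.sqrt_mul (div_nonneg h0.le h1.le)]
    rw [show v 0 / v 1 * (v 1 / v 0) = 1 by field_simp]
    exact Real.sqrt_one
  calc Real.sqrt (v 0 / v 1) * (2 * Real.sqrt 3 * Real.sqrt (v 1 / v 0))
      = 2 * Real.sqrt 3 * (Real.sqrt (v 0 / v 1) * Real.sqrt (v 1 / v 0)) := by ring
    _ = 2 * Real.sqrt 3 := by rw [this, mul_one]

lemma fderiv_Z2bar {v : Fin 3 → ℝ} (h0 : 0 < v 0) (h1 : 0 < v 1) :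
    fderiv ℝ Z2bar v = 0 := by
  have hopen : IsOpen {w : Fin 3 → ℝ | 0 < w 0 ∧ 0 < w 1} :=
    (isOpen_lt continuous_const (continuous_apply 0)).inter
      (isOpen_lt continuous_const (continuous_apply 1))
  have hev : Z2bar =ᶠ[nhds v] fun _ => ![0, 0, 2 * Real.sqrt 3] := by
    filter_upwards [hopen.mem_nhds ⟨h0, h1⟩] with w hw
    exact Z2bar_eq_const hw.1 hw.2
  rw [hev.fderiv_eq, fderiv_fun_const]
  rfl

/-- On `ρ > 0, p > 0` the rescaled fields satisfy `Z̄₂ = (0,0,2√3)`, `X̄₀ = (ρ,0,0)`,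
and all pairwise Lie brackets vanish. -/
theorem euler_rescaled_commuting_frame :
    ∀ v : Fin 3 → ℝ, 0 < v 0 → 0 < v 1 →
      Z2bar v = ![0, 0, 2 * Real.sqrt 3] ∧
      X0bar v = ![v 0, 0, 0] ∧
      bracket X0bar Z1bar v = 0 ∧
      bracket X0bar Z2bar v = 0 ∧
      bracket Z1bar Z2bar v = 0 := by
  intro v h0 h1
  refine ⟨Z2bar_eq_const h0 h1, ?_, ?_, ?_, ?_⟩
  · funext i; fin_cases i <;> simp [X0bar, Xzero]
  · funext i
    rw [bracket, fderiv_Z1bar, fderiv_X0bar]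
    fin_cases i <;>
      simp [L0, L1, X0bar, Z1bar, Z1, Xzero, ContinuousLinearMap.pi_apply]
  · funext i
    rw [bracket, fderiv_Z2bar h0 h1, fderiv_X0bar, Z2bar_eq_const h0 h1]
    fin_cases i <;> simp [L0, ContinuousLinearMap.pi_apply]
  · funext i
    rw [bracket, fderiv_Z2bar h0 h1, fderiv_Z1bar, Z2bar_eq_const h0 h1]
    fin_cases i <;> simp [L1, ContinuousLinearMap.pi_apply]
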